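/- Let f and g be global spacelike solutions with f(0) > 0 and g(0) > 0 whose first integrals are equal: C_f = C_g. Then there exist t₀ ∈ ℝ and α ∈ {1, −1} such that g(t) = f(α·t + t₀) for all t ∈ ℝ; that is, g is obtained from f by a translation, possibly composed with the reflection t ↦ −t. -/

import Mathlib

open Real Filter

/-- A global spacelike solution: a `C²` function `f : ℝ → ℝ` with `|f'| < 1` and
`f'' = f^(n-1) (1 - f'^2)^((n+2)/2)` on all of `ℝ`. -/
def IsGSS (n : ℕ) (f : ℝ → ℝ) : Prop :=
  ContDiff ℝ 2 f ∧
  ∀ t : ℝ, |deriv f t| < 1 ∧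
    deriv (deriv f) t = f t ^ (n - 1) * (1 - (deriv f t) ^ 2) ^ ((n + 2 : ℝ) / 2)

/-- The first integral `C_f = (1 - f'(0)²)^(-n/2) - f(0)^n` of a global spacelike
solution (this quantity is independent of the point where it is evaluated). -/
noncomputable def firstIntegral (n : ℕ) (f : ℝ → ℝ) : ℝ :=
  (1 - (deriv f 0) ^ 2) ^ (-(n : ℝ) / 2) - f 0 ^ n

namespace GSSAux

variable {n : ℕ} {f g : ℝ → ℝ}

lemma gss_diff (hf : IsGSS n f) : Differentiable ℝ f :=
  hf.1.differentiable (by norm_num)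

lemma gss_cd1 (hf : IsGSS n f) : ContDiff ℝ 1 (deriv f) := by
  have := (contDiff_succ_iff_deriv (n := 1)).mp (by exact_mod_cast hf.1)
  exact this.2.2

lemma gss_dd (hf : IsGSS n f) : Differentiable ℝ (deriv f) :=
  (gss_cd1 hf).differentiable one_ne_zero

lemma gss_c1 (hf : IsGSS n f) : Continuous (deriv f) :=
  (gss_dd hf).continuous

lemma gss_c2 (hf : IsGSS n f) : Continuous (deriv (deriv f)) := by
  have := (contDiff_one_iff_deriv).mp (gss_cd1 hf)
  exact this.2

lemma one_sub_sq_pos (hf : IsGSS n f) (t : ℝ) : 0 < 1 - (deriv f t) ^ 2 := by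
  have h := (hf.2 t).1
  nlinarith [abs_lt.mp h]

/-- The first integral is constant. -/
lemma fi_hasDerivAt (hf : IsGSS n f) (x : ℝ) :
    HasDerivAt (fun t => (1 - (deriv f t) ^ 2) ^ (-(n : ℝ) / 2) - f t ^ n) 0 x := by
  have hu : HasDerivAt (deriv f) (deriv (deriv f) x) x := ((gss_dd hf) x).hasDerivAt
  have hbase : HasDerivAt (fun t => 1 - (deriv f t) ^ 2)
      (-(2 * deriv f x * deriv (deriv f) x)) x := by
    have := (hu.pow 2).const_sub 1
    refine this.congr_deriv ?_
    simp [pow_one]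
  have hpos := one_sub_sq_pos hf x
  have h1 : HasDerivAt (fun t => (1 - (deriv f t) ^ 2) ^ (-(n : ℝ) / 2))
      ((-(2 * deriv f x * deriv (deriv f) x)) *
        ((-(n : ℝ) / 2) * (1 - (deriv f x) ^ 2) ^ (-(n : ℝ) / 2 - 1))) x := by
    have := hbase.rpow_const (p := -(n : ℝ) / 2) (Or.inl hpos.ne')
    convert this using 1
    ring
  have h2 : HasDerivAt (fun t => f t ^ n) ((n : ℝ) * f x ^ (n - 1) * deriv f x) x := by
    exact ((gss_diff hf x).hasDerivAt.pow n)
  have h3 := h1.sub h2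
  refine h3.congr_deriv ?_
  symm
  rw [(hf.2 x).2]
  have hP : (1 - (deriv f x) ^ 2) ^ ((n + 2 : ℝ) / 2) *
      (1 - (deriv f x) ^ 2) ^ (-(n : ℝ) / 2 - 1) = 1 := by
    rw [← Real.rpow_add hpos]
    have : (n + 2 : ℝ) / 2 + (-(n : ℝ) / 2 - 1) = 0 := by ring
    rw [this, Real.rpow_zero]
  linear_combination (-(n : ℝ) * deriv f x * f x ^ (n - 1)) * hP

lemma fi_const (hn : 2 ≤ n) (hf : IsGSS n f) (t : ℝ) :
    (1 - (deriv f t) ^ 2) ^ (-(n : ℝ) / 2) - f t ^ n = firstIntegral n f := by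
  have h := fun x => fi_hasDerivAt hf x
  exact is_const_of_deriv_eq_zero (fun x => (h x).differentiableAt)
    (fun x => (h x).deriv) t 0

/-- reach-down lemma -/
lemma reach_down (hn : 2 ≤ n) (hf : IsGSS n f) {v : ℝ} (hv : 0 < v)
    (hvC : 1 - firstIntegral n f ≤ v ^ n) : ∃ t, f t ≤ v := by
  by_contra hcon
  push_neg at hcon
  have hn0 : n ≠ 0 := by omega
  have hdd_pos : ∀ t, 0 < deriv (deriv f) t := by
    intro t
    rw [(hf.2 t).2]
    exact mul_pos (pow_pos (lt_trans hv (hcon t)) _)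
      (Real.rpow_pos_of_pos (one_sub_sq_pos hf t) _)
  have hsm : StrictMono (deriv f) := strictMono_of_deriv_pos hdd_pos
  by_cases hzz : ∃ t, deriv f t = 0
  · obtain ⟨t, ht⟩ := hzz
    have hfi := fi_const hn hf t
    rw [ht] at hfi
    simp only [ne_eq, OfNat.ofNat_ne_zero, not_false_eq_true, zero_pow, sub_zero,
      Real.one_rpow] at hfi
    have h3 : v ^ n < f t ^ n := pow_lt_pow_left₀ (hcon t) hv.le hn0
    linarith
  · push_neg at hzz
    have hsign : (∀ t, 0 < deriv f t) ∨ (∀ t, deriv f t < 0) := by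
      rcases lt_or_gt_of_ne (hzz 0) with h0 | h0
      · right
        intro t
        rcases lt_or_gt_of_ne (hzz t) with h' | h'
        · exact h'
        · exfalso
          have hmem : (0 : ℝ) ∈ Set.uIcc (deriv f 0) (deriv f t) := by
            rw [Set.mem_uIcc]
            left
            exact ⟨h0.le, h'.le⟩
          obtain ⟨z, _, hz0⟩ := intermediate_value_uIcc
            (a := (0:ℝ)) (b := t) ((gss_c1 hf).continuousOn) hmem
          exact hzz z hz0
      · left
        intro t
        rcases lt_or_gt_of_ne (hzz t) with h' | h'
        · exfalso
          have hmem : (0 : ℝ) ∈ Set.uIcc (deriv f 0) (deriv f t) := by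
            rw [Set.mem_uIcc]
            right
            exact ⟨h'.le, h0.le⟩
          obtain ⟨z, _, hz0⟩ := intermediate_value_uIcc
            (a := (0:ℝ)) (b := t) ((gss_c1 hf).continuousOn) hmem
          exact hzz z hz0
        · exact h'
    have hc0 : 0 < v ^ (n - 1) * (1 - (deriv f 0) ^ 2) ^ ((n + 2 : ℝ) / 2) :=
      mul_pos (pow_pos hv _) (Real.rpow_pos_of_pos (one_sub_sq_pos hf 0) _)
    set c := v ^ (n - 1) * (1 - (deriv f 0) ^ 2) ^ ((n + 2 : ℝ) / 2) with hc
    rcases hsign with hpos | hneg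
    · -- derivative everywhere positive; contradiction far to the left
      have hbound : ∀ t ≤ (0:ℝ), c ≤ deriv (deriv f) t := by
        intro t ht
        rw [(hf.2 t).2, hc]
        apply mul_le_mul
        · exact pow_le_pow_left₀ hv.le (hcon t).le _
        · apply Real.rpow_le_rpow (one_sub_sq_pos hf 0).le
          · nlinarith [hpos t, hsm.monotone ht]
          · positivity
        · exact (Real.rpow_pos_of_pos (one_sub_sq_pos hf 0) _).le
        · exact (pow_pos (lt_trans hv (hcon t)) _).le
      have hu0 : 0 < deriv f 0 := hpos 0
      set T := -(deriv f 0 + 1) / c with hT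
      have hT0 : T < 0 := by
        rw [hT]
        apply div_neg_of_neg_of_pos _ hc0
        linarith
      obtain ⟨z, hzmem, hzslope⟩ := exists_hasDerivAt_eq_slope (deriv f) (deriv (deriv f))
        hT0 ((gss_c1 hf).continuousOn) (fun x _ => (gss_dd hf x).hasDerivAt)
      have hzc : c ≤ deriv (deriv f) z := hbound z hzmem.2.le
      have hTne : (0 : ℝ) - T ≠ 0 := by linarith
      have h5 : deriv f 0 - deriv f T = deriv (deriv f) z * (0 - T) := by
        rw [hzslope, div_mul_cancel₀ _ hTne]
      have h6 : c * (0 - T) ≤ deriv (deriv f) z * (0 - T) :=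
        mul_le_mul_of_nonneg_right hzc (by linarith)
      have h7 : c * (0 - T) = deriv f 0 + 1 := by
        rw [hT]
        field_simp
        ring
      linarith [hpos T]
    · -- derivative everywhere negative; contradiction far to the right
      have hbound : ∀ t, 0 ≤ t → c ≤ deriv (deriv f) t := by
        intro t ht
        rw [(hf.2 t).2, hc]
        apply mul_le_mul
        · exact pow_le_pow_left₀ hv.le (hcon t).le _
        · apply Real.rpow_le_rpow (one_sub_sq_pos hf 0).le
          · nlinarith [hneg t, hsm.monotone ht]
          · positivity
        · exact (Real.rpow_pos_of_pos (one_sub_sq_pos hf 0) _).le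
        · exact (pow_pos (lt_trans hv (hcon t)) _).le
      have hu0 : deriv f 0 < 0 := hneg 0
      set T := (1 - deriv f 0) / c with hT
      have hT0 : 0 < T := by
        rw [hT]
        apply div_pos _ hc0
        linarith
      obtain ⟨z, hzmem, hzslope⟩ := exists_hasDerivAt_eq_slope (deriv f) (deriv (deriv f))
        hT0 ((gss_c1 hf).continuousOn) (fun x _ => (gss_dd hf x).hasDerivAt)
      have hzc : c ≤ deriv (deriv f) z := hbound z hzmem.1.le
      have hTne : T - 0 ≠ 0 := by linarith
      have h5 : deriv f T - deriv f 0 = deriv (deriv f) z * (T - 0) := by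
        rw [hzslope, div_mul_cancel₀ _ hTne]
      have h6 : c * (T - 0) ≤ deriv (deriv f) z * (T - 0) :=
        mul_le_mul_of_nonneg_right hzc (by linarith)
      have h7 : c * (T - 0) = 1 - deriv f 0 := by
        rw [hT]
        field_simp
        ring
      linarith [hneg T]

lemma hasDerivAt_shift (hf : Differentiable ℝ f) (α c x : ℝ) :
    HasDerivAt (fun x => f (α * x + c)) (α * deriv f (α * x + c)) x := by
  have h1 : HasDerivAt (fun x : ℝ => α * x + c) α x := by
    simpa using ((hasDerivAt_id x).const_mul α).add_const c
  have := ((hf (α * x + c)).hasDerivAt).comp x h1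
  refine this.congr_deriv ?_
  ring

lemma deriv_shift (hf : Differentiable ℝ f) (α c : ℝ) (x : ℝ) :
    deriv (fun x => f (α * x + c)) x = α * deriv f (α * x + c) :=
  (hasDerivAt_shift hf α c x).deriv

lemma deriv_shift' (hf : Differentiable ℝ f) (α c : ℝ) :
    deriv (fun x => f (α * x + c)) = fun x => α * deriv f (α * x + c) :=
  funext (deriv_shift hf α c)

lemma shift_gss (hf : IsGSS n f) {α : ℝ} (hα : α = 1 ∨ α = -1) (c : ℝ) :
    IsGSS n (fun x => f (α * x + c)) := by
  have hα2 : α ^ 2 = 1 := by rcases hα with h | h <;> simp [h]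
  have hα1 : |α| = 1 := by rcases hα with h | h <;> simp [h]
  have haff : ContDiff ℝ 2 (fun x : ℝ => α * x + c) :=
    (contDiff_const.mul contDiff_id).add contDiff_const
  refine ⟨hf.1.comp haff, fun t => ?_⟩
  rw [deriv_shift' (gss_diff hf) α c]
  constructor
  · rw [abs_mul, hα1, one_mul]
    exact (hf.2 (α * t + c)).1
  · have hd2 : ∀ x, HasDerivAt (fun x => α * deriv f (α * x + c))
        (α * (α * deriv (deriv f) (α * x + c))) x := by
      intro x
      exact (hasDerivAt_shift (gss_dd hf) α c x).const_mul α
    rw [(hd2 t).deriv, (hf.2 (α * t + c)).2, mul_pow, hα2, one_mul, ← mul_assoc]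
    have hαα : α * α = 1 := by rcases hα with h | h <;> norm_num [h]
    rw [hαα, one_mul]

/-- uniqueness of solutions -/
lemma gss_curve_hasDerivAt (hf : IsGSS n f) (x : ℝ) :
    HasDerivAt (fun x => (f x, deriv f x))
      ((fun p : ℝ × ℝ => (p.2, p.1 ^ (n - 1) * (1 - p.2 ^ 2) ^ ((n + 2 : ℝ) / 2)))
        (f x, deriv f x)) x := by
  have hd2 : HasDerivAt (deriv f)
      (f x ^ (n - 1) * (1 - (deriv f x) ^ 2) ^ ((n + 2 : ℝ) / 2)) x := by
    rw [← (hf.2 x).2]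
    exact (gss_dd hf x).hasDerivAt
  exact ((gss_diff hf x).hasDerivAt.prodMk hd2)

lemma gss_unique (hf : IsGSS n f) (hg : IsGSS n g) (s : ℝ)
    (h1 : f s = g s) (h2 : deriv f s = deriv g s) : ∀ t, g t = f t := by
  set V : ℝ × ℝ → ℝ × ℝ :=
    fun p => (p.2, p.1 ^ (n - 1) * (1 - p.2 ^ 2) ^ ((n + 2 : ℝ) / 2)) with hV
  set Ff : ℝ → ℝ × ℝ := fun x => (f x, deriv f x) with hFf
  set Fg : ℝ → ℝ × ℝ := fun x => (g x, deriv g x) with hFg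
  have hcf : Continuous Ff := (gss_diff hf).continuous.prodMk (gss_c1 hf)
  have hcg : Continuous Fg := (gss_diff hg).continuous.prodMk (gss_c1 hg)
  set E : Set ℝ := {x | Ff x = Fg x} with hE
  have hclosed : IsClosed E := isClosed_eq hcf hcg
  have hne : s ∈ E := by
    simp only [hE, Set.mem_setOf_eq, hFf, hFg, Prod.ext_iff]
    exact ⟨h1, h2⟩
  have hopen : IsOpen E := by
    rw [isOpen_iff_mem_nhds]
    intro x₀ hx₀
    have hp : 0 < 1 - (deriv f x₀) ^ 2 := one_sub_sq_pos hf x₀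
    have hcd : ContDiffAt ℝ 1 V (Ff x₀) := by
      apply ContDiffAt.prodMk
      · exact contDiffAt_snd
      · apply ContDiffAt.mul
        · exact contDiffAt_fst.pow _
        · exact (contDiffAt_const.sub (contDiffAt_snd.pow 2)).rpow_const_of_ne hp.ne'
    obtain ⟨K, U, hU, hK⟩ := hcd.exists_lipschitzOnWith
    have heq : Ff =ᶠ[nhds x₀] Fg := by
      apply ODE_solution_unique_of_eventually (v := fun _ => V) (s := fun _ => U)
        (K := K) (Filter.Eventually.of_forall fun _ => hK)
      · filter_upwards [hcf.continuousAt.preimage_mem_nhds hU] with t ht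
        exact ⟨gss_curve_hasDerivAt hf t, ht⟩
      · have hU' : Fg ⁻¹' U ∈ nhds x₀ := by
          apply hcg.continuousAt.preimage_mem_nhds
          rwa [← hx₀]
        filter_upwards [hU'] with t ht
        exact ⟨gss_curve_hasDerivAt hg t, ht⟩
      · exact hx₀
    exact heq
  have : E = Set.univ := (isClopen_iff.mp ⟨hclosed, hopen⟩).resolve_left
    (Set.nonempty_iff_ne_empty.mp ⟨s, hne⟩)
  intro t
  have ht : Ff t = Fg t := by
    have : t ∈ E := by rw [this]; trivial
    exact this
  exact ((Prod.ext_iff.mp ht).1).symm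

end GSSAux

open GSSAux

/-- two global spacelike solutions, positive at `0`, with equal first
integrals, agree up to a translation possibly composed with the reflection. -/
theorem stmt_4 (n : ℕ) (hn : 2 ≤ n) (f g : ℝ → ℝ)
    (hf : IsGSS n f) (hg : IsGSS n g)
    (hf0 : 0 < f 0) (hg0 : 0 < g 0)
    (hC : firstIntegral n f = firstIntegral n g) :
    ∃ t₀ α : ℝ, (α = 1 ∨ α = -1) ∧ ∀ t : ℝ, g t = f (α * t + t₀) := by
  have hexp : (-(n : ℝ) / 2) ≤ 0 := by
    have : (0 : ℝ) ≤ n := Nat.cast_nonneg n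
    linarith
  have hexpne : (-(n : ℝ) / 2) ≠ 0 := by
    have h2 : (2 : ℝ) ≤ n := by exact_mod_cast hn
    intro h
    have : (n : ℝ) = 0 := by linarith [(div_eq_zero_iff.mp h)]
    nlinarith
  have hone : ∀ (h : ℝ → ℝ), IsGSS n h → ∀ x,
      (1 : ℝ) ≤ (1 - (deriv h x) ^ 2) ^ (-(n : ℝ) / 2) := by
    intro h hh x
    apply Real.one_le_rpow_of_pos_of_le_one_of_nonpos (one_sub_sq_pos hh x) _ hexp
    nlinarith [sq_nonneg (deriv h x)]
  have hf0n : 1 - firstIntegral n f ≤ f 0 ^ n := by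
    have h1 := fi_const hn hf 0
    have h2 := hone f hf 0
    linarith
  have hg0n : 1 - firstIntegral n g ≤ g 0 ^ n := by
    have h1 := fi_const hn hg 0
    have h2 := hone g hg 0
    linarith
  -- find a common value of f and g
  have hkey : ∃ t s : ℝ, f t = g s := by
    rcases le_total (f 0) (g 0) with hle | hle
    · obtain ⟨s₁, hs₁⟩ := reach_down hn hg hf0 (by rw [← hC]; exact hf0n)
      have hmem : f 0 ∈ Set.uIcc (g s₁) (g 0) := by
        rw [Set.mem_uIcc]
        left
        exact ⟨hs₁, hle⟩
      obtain ⟨s, _, hs⟩ := intermediate_value_uIcc (a := s₁) (b := 0)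
        ((gss_diff hg).continuous.continuousOn) hmem
      exact ⟨0, s, hs.symm⟩
    · obtain ⟨t₁, ht₁⟩ := reach_down hn hf hg0 (by rw [hC]; exact hg0n)
      have hmem : g 0 ∈ Set.uIcc (f t₁) (f 0) := by
        rw [Set.mem_uIcc]
        left
        exact ⟨ht₁, hle⟩
      obtain ⟨t, _, ht⟩ := intermediate_value_uIcc (a := t₁) (b := 0)
        ((gss_diff hf).continuous.continuousOn) hmem
      exact ⟨t, 0, ht⟩
  obtain ⟨t, s, hts⟩ := hkey
  -- derivative matching up to sign
  have h1 := fi_const hn hf t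
  have h2 := fi_const hn hg s
  have hA : (1 - (deriv f t) ^ 2) ^ (-(n : ℝ) / 2)
      = (1 - (deriv g s) ^ 2) ^ (-(n : ℝ) / 2) := by
    rw [hts] at h1
    linarith [hC]
  have hAB : 1 - (deriv f t) ^ 2 = 1 - (deriv g s) ^ 2 := by
    calc 1 - (deriv f t) ^ 2
        = ((1 - (deriv f t) ^ 2) ^ (-(n : ℝ) / 2)) ^ (-(n : ℝ) / 2)⁻¹ :=
          (Real.rpow_rpow_inv (one_sub_sq_pos hf t).le hexpne).symm
      _ = ((1 - (deriv g s) ^ 2) ^ (-(n : ℝ) / 2)) ^ (-(n : ℝ) / 2)⁻¹ := by rw [hA]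
      _ = 1 - (deriv g s) ^ 2 :=
          Real.rpow_rpow_inv (one_sub_sq_pos hg s).le hexpne
  have hsq : (deriv f t) ^ 2 = (deriv g s) ^ 2 := by linarith
  have hor : deriv f t = deriv g s ∨ deriv f t = -(deriv g s) := by
    have := sq_eq_sq_iff_eq_or_eq_neg.mp hsq
    exact this
  rcases hor with hd | hd
  · refine ⟨t - s, 1, Or.inl rfl, ?_⟩
    have hF := shift_gss hf (Or.inl rfl) (t - s)
    have hFs : (fun x => f (1 * x + (t - s))) s = g s := by
      simp only [one_mul]
      rw [show s + (t - s) = t by ring, hts]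
    have hFd : deriv (fun x => f (1 * x + (t - s))) s = deriv g s := by
      rw [deriv_shift (gss_diff hf), one_mul, one_mul,
        show s + (t - s) = t by ring, hd]
    exact fun x => gss_unique hF hg s hFs hFd x
  · refine ⟨t + s, -1, Or.inr rfl, ?_⟩
    have hF := shift_gss hf (Or.inr rfl) (t + s)
    have hFs : (fun x => f (-1 * x + (t + s))) s = g s := by
      simp only [neg_mul, one_mul]
      rw [show -s + (t + s) = t by ring, hts]
    have hFd : deriv (fun x => f (-1 * x + (t + s))) s = deriv g s := by
      rw [deriv_shift (gss_diff hf)]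
      rw [show -1 * s + (t + s) = t by ring, hd]
      ring
    exact fun x => gss_unique hF hg s hFs hFd x
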